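/- Let Φ : ω^{[k]} → ω^{[k+1]} be given by Φ(v) = (0)⌢v. For every E ∈ AR^k with ≺-minimum v, there exists F ∈ AR^{k+1} such that Φ(E) ⊆ F, min_≺(F) = min_≺(Φ(E)), and max_≺(F) = max_≺(Φ(E)). -/

import Mathlib

/-- Non-decreasing list of naturals. -/
abbrev NonDec (l : List ℕ) : Prop := l.Chain' (· ≤ ·)

/-- The order `≺` on nondecreasing sequences: the empty sequence is minimal;
nonempty sequences are compared by last entry, with lexicographic tie-breaking. -/
def prec (s t : List ℕ) : Prop :=
  (s = [] ∧ t ≠ []) ∨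
  (s ≠ [] ∧ t ≠ [] ∧ (s.getLast! < t.getLast! ∨
    (s.getLast! = t.getLast! ∧ List.Lex (· < ·) s t)))

/-- The map `X̂_v`: `(m_1,…,m_l) ↦ (f_1(m_1),…,f_l(m_l))` where
`f_j(0) = n_j` and `f_j(m) = n_k + m` for `m ≥ 1`, `v = (n_1,…,n_k)`. -/
def Xhat (v s : List ℕ) : List ℕ :=
  List.zipWith (fun a b => if b = 0 then a else v.getLast! + b) (v.take s.length) s

/-- The set `X_v^max`, described by its characterization:
`w ∈ X_v^max` iff `w` is nondecreasing of the same length as `v` and either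
`w_1 > n_k`, or there is `1 ≤ i ≤ k` with `(w_1,…,w_i) = (n_1,…,n_i)` and
(if `i < k`) `w_{i+1} > n_k`. -/
def XmaxSet (v : List ℕ) : Set (List ℕ) :=
  { w | w.length = v.length ∧ NonDec w ∧
    (v.getLast! < w.headI ∨
      ∃ i, 1 ≤ i ∧ i ≤ v.length ∧ w.take i = v.take i ∧
        (i < v.length → v.getLast! < w.getD i 0)) }

/-- An `E_k`-tree: a map on `ω^{≤k}` sending nondecreasing sequences of length `≤ k`
to nondecreasing sequences of the same length, preserving `≺` and initial segments. -/
def IsEkTree (k : ℕ) (X : List ℕ → List ℕ) : Prop :=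
  (∀ s, NonDec s → s.length ≤ k → NonDec (X s) ∧ (X s).length = s.length) ∧
  (∀ s t, NonDec s → NonDec t → s.length ≤ k → t.length ≤ k →
    (prec s t → prec (X s) (X t)) ∧ (s <+: t → X s <+: X t))

/-- `E ∈ AR^k`: `E` is a finite `≺`-initial segment of the restriction to `ω^{[k]}`
of some `E_k`-tree. -/
def memAR (k : ℕ) (E : Finset (List ℕ)) : Prop :=
  ∃ X : List ℕ → List ℕ, IsEkTree k X ∧
    (∀ e ∈ E, ∃ s, NonDec s ∧ s.length = k ∧ e = X s) ∧
    (∀ s, NonDec s → s.length = k → ∀ e ∈ E, prec (X s) e → X s ∈ E)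

/-!
Let `X` witness `E ∈ AR^k`. As `0^k` is the `≺`-least element of `ω^[k]` and `E` is a
`≺`-initial segment, `X(0^k) = v`. If `s ≠ 0^k` has its first nonzero entry at place `i`,
comparing `0^i m` with `0^(k-1) m` and `0^k` shows that `X(s)` agrees with `v` before place `i`
and exceeds `max v` from place `i` on. Such sequences, prefixed by `0`, are exactly the values
of the explicit `E_{k+1}`-tree `X̂_{0⌢v}`, whose least value is `X̂_{0⌢v}(0^{k+1}) = 0⌢v`.
Take for `F` all values of `X̂_{0⌢v}` that are `≼ 0⌢u`; it is finite because their entries are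
bounded by `max u`.
-/

theorem lt_of_lex_replicate {α : Type*} {r : α → α → Prop} {a : α} (ha : ¬ r a a) :
    ∀ {m n : ℕ}, List.Lex r (List.replicate m a) (List.replicate n a) → m < n
  | 0, 0, h => nomatch h
  | 0, _ + 1, _ => Nat.succ_pos _
  | m + 1, n + 1, h => by
    rw [List.replicate_succ, List.replicate_succ] at h
    cases h with
    | cons h => exact Nat.succ_lt_succ (lt_of_lex_replicate ha h)
    | rel h => exact absurd h ha

theorem lex_zipWith_left {α β γ : Type*} {r : α → α → Prop} {r' : β → β → Prop}
    {f : γ → α → β} {w : List γ} (hf : ∀ c ∈ w, ∀ a b, r a b → r' (f c a) (f c b))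
    {s t : List α} (ht : t.length ≤ w.length) (h : List.Lex r s t) :
    List.Lex r' (List.zipWith f w s) (List.zipWith f w t) := by
  induction h generalizing w with
  | nil =>
    obtain ⟨c, w, rfl⟩ := List.exists_cons_of_length_pos (Nat.lt_of_lt_of_le (by simp) ht)
    exact .nil
  | cons _ ih =>
    obtain ⟨c, w, rfl⟩ := List.exists_cons_of_length_pos (Nat.lt_of_lt_of_le (by simp) ht)
    exact .cons (ih (fun c hc => hf c (List.mem_cons_of_mem _ hc)) (by simpa using ht))
  | rel hab =>
    obtain ⟨c, w, rfl⟩ := List.exists_cons_of_length_pos (Nat.lt_of_lt_of_le (by simp) ht)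
    exact .rel (hf c List.mem_cons_self _ _ hab)

theorem finite_setOf_length_eq_forall_le (n B : ℕ) :
    {l : List ℕ | l.length = n ∧ ∀ x ∈ l, x ≤ B}.Finite := by
  refine ((List.finite_length_eq (Fin (B + 1)) n).image (List.map Fin.val)).subset ?_
  rintro l ⟨hl, hB⟩
  refine ⟨l.pmap (fun x hx => (⟨x, Nat.lt_succ_of_le hx⟩ : Fin (B + 1))) hB, by simpa using hl, ?_⟩
  simp [List.map_pmap]

theorem prec_irrefl (l : List ℕ) : ¬ prec l l := by
  rintro (⟨rfl, h⟩ | ⟨-, -, h | ⟨-, h⟩⟩)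
  · exact h rfl
  · exact lt_irrefl _ h
  · exact List.lex_irrefl Nat.lt_irrefl l h

theorem prec_trans {a b c : List ℕ} (hab : prec a b) (hbc : prec b c) : prec a c := by
  rcases hab with ⟨rfl, hb⟩ | ⟨ha, hb, hab⟩ <;> rcases hbc with ⟨rfl, -⟩ | ⟨-, hc, hbc⟩
  · exact absurd rfl hb
  · exact Or.inl ⟨rfl, hc⟩
  · exact absurd rfl hb
  · refine Or.inr ⟨ha, hc, ?_⟩
    rcases hab with hab | ⟨hab, lab⟩ <;> rcases hbc with hbc | ⟨hbc, lbc⟩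
    · exact Or.inl (hab.trans hbc)
    · exact Or.inl (hbc ▸ hab)
    · exact Or.inl (hab ▸ hbc)
    · exact Or.inr ⟨hab.trans hbc, List.lex_trans Nat.lt_trans lab lbc⟩

theorem prec_asymm {a b : List ℕ} (hab : prec a b) (hba : prec b a) : False :=
  prec_irrefl a (prec_trans hab hba)

theorem getLast!_le_of_prec {a b : List ℕ} (h : prec a b) : a.getLast! ≤ b.getLast! := by
  rcases h with ⟨rfl, -⟩ | ⟨-, -, h | ⟨h, -⟩⟩
  · exact Nat.zero_le _
  · exact h.le
  · exact h.le

theorem dropLast_append_getLast! {l : List ℕ} (hl : l ≠ []) : l.dropLast ++ [l.getLast!] = l := by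
  simpa [List.getLast?_eq_some_getLast hl] using List.dropLast_concat_getLast hl

theorem getLast!_lt_of_prec {a b : List ℕ} (h : prec a b) (ha : a ≠ [])
    (hab : a.dropLast = b.dropLast) : a.getLast! < b.getLast! := by
  obtain ⟨-, hb, h | ⟨heq, hlex⟩⟩ := h.resolve_left fun h => ha h.1
  · exact h
  · have hab : a = b := by
      rw [← dropLast_append_getLast! ha, ← dropLast_append_getLast! hb, hab, heq]
    exact absurd (hab ▸ hlex) (List.lex_irrefl Nat.lt_irrefl b)

theorem getLast!_zero_cons (l : List ℕ) : (0 :: l).getLast! = l.getLast! := by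
  cases l <;> simp

theorem prec_zero_cons {a b : List ℕ} (h : prec a b) : prec (0 :: a) (0 :: b) := by
  refine Or.inr ⟨List.cons_ne_nil _ _, List.cons_ne_nil _ _, ?_⟩
  rw [getLast!_zero_cons, getLast!_zero_cons]
  rcases h with ⟨rfl, hb⟩ | ⟨-, -, h | ⟨h, hlex⟩⟩
  · obtain ⟨c, b, rfl⟩ := List.exists_cons_of_ne_nil hb
    rcases Nat.eq_zero_or_pos (c :: b).getLast! with h0 | h0
    · exact Or.inr ⟨h0.symm, .cons .nil⟩
    · exact Or.inl h0
  · exact Or.inl h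
  · exact Or.inr ⟨h, .cons hlex⟩

theorem NonDec.le_getLast! {l : List ℕ} (hl : NonDec l) {x : ℕ} (hx : x ∈ l) :
    x ≤ l.getLast! :=
  hl.backwards_induction (· ≤ l.getLast!) l (fun _ _ hxy hy => hxy.trans hy)
    (fun hne => by simp [List.getLast?_eq_some_getLast hne]) x hx

theorem NonDec.eq_replicate_of_getLast!_eq_zero {l : List ℕ} (hl : NonDec l)
    (h : l.getLast! = 0) : l = List.replicate l.length 0 :=
  List.eq_replicate_iff.2 ⟨rfl, fun _ hx => Nat.eq_zero_of_le_zero (h ▸ hl.le_getLast! hx)⟩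

theorem NonDec.getD_le_getLast! {l : List ℕ} (hl : NonDec l) (i : ℕ) : l.getD i 0 ≤ l.getLast! := by
  rcases lt_or_ge i l.length with hi | hi
  · exact List.getD_eq_getElem l 0 hi ▸ hl.le_getLast! (List.getElem_mem hi)
  · rw [List.getD_eq_default l 0 hi]
    exact Nat.zero_le _

theorem NonDec.getD_le_getD {l : List ℕ} (hl : NonDec l) {i j : ℕ} (hij : i ≤ j)
    (hj : j < l.length) : l.getD i 0 ≤ l.getD j 0 := by
  rw [List.getD_eq_getElem _ _ (hij.trans_lt hj), List.getD_eq_getElem _ _ hj]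
  exact (List.sortedLE_iff_isChain.2 hl).getElem_le_getElem_of_le hij

theorem NonDec.zero_cons {l : List ℕ} (hl : NonDec l) : NonDec (0 :: l) :=
  List.isChain_cons.2 ⟨fun _ _ => Nat.zero_le _, hl⟩

theorem nonDec_replicate_zero (n : ℕ) : NonDec (List.replicate n 0) :=
  List.isChain_replicate_of_rel n le_rfl

theorem nonDec_replicate_zero_append_singleton (n a : ℕ) :
    NonDec (List.replicate n 0 ++ [a]) :=
  List.isChain_append.2 ⟨nonDec_replicate_zero n, List.isChain_singleton a,
    fun _ hx _ _ => List.eq_of_mem_replicate (List.mem_of_mem_getLast? hx) ▸ Nat.zero_le _⟩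

theorem prec_replicate_zero {s : List ℕ} (hs : NonDec s) (hne : s ≠ List.replicate s.length 0) :
    prec (List.replicate s.length 0) s := by
  have hs0 : s ≠ [] := by rintro rfl; exact hne rfl
  refine Or.inr ⟨by simpa using hs0, hs0, Or.inl ?_⟩
  have : 0 < s.getLast! :=
    Nat.pos_of_ne_zero fun h => hne (hs.eq_replicate_of_getLast!_eq_zero h)
  simpa [List.getLast?_replicate, hs0] using this

theorem eq_replicate_zero_or_exists (l : List ℕ) :
    l = List.replicate l.length 0 ∨ ∃ i m r, m ≠ 0 ∧ l = List.replicate i 0 ++ m :: r := by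
  induction l with
  | nil => exact Or.inl rfl
  | cons a l ih =>
    by_cases ha : a = 0
    · subst ha
      rcases ih with h | ⟨i, m, r, hm, h⟩
      · exact Or.inl (by rw [List.length_cons, List.replicate_succ, ← h])
      · exact Or.inr ⟨i + 1, m, r, hm, by rw [h]; rfl⟩
    · exact Or.inr ⟨0, a, l, ha, rfl⟩

def xhatEntry (L a b : ℕ) : ℕ := if b = 0 then a else L + b

theorem xhatEntry_le_xhatEntry {L a a' b b' : ℕ} (ha : a ≤ L) (haa' : a ≤ a') (hbb' : b ≤ b') :
    xhatEntry L a b ≤ xhatEntry L a' b' := by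
  unfold xhatEntry; split_ifs <;> omega

theorem xhatEntry_lt_xhatEntry {L a a' b b' : ℕ} (ha : a ≤ L) (hbb' : b < b') :
    xhatEntry L a b < xhatEntry L a' b' := by
  unfold xhatEntry; split_ifs <;> omega

theorem Xhat_eq_zipWith (w s : List ℕ) : Xhat w s = List.zipWith (xhatEntry w.getLast!) w s :=
  List.ext_getElem (by simp [Xhat, Nat.min_comm]) fun i _ _ => by simp [Xhat, xhatEntry]

theorem length_Xhat {w s : List ℕ} (h : s.length ≤ w.length) : (Xhat w s).length = s.length := by
  simp [Xhat_eq_zipWith, h]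

theorem Xhat_replicate_append {w t : List ℕ} {i : ℕ} (hi : i + t.length ≤ w.length)
    (ht : ∀ x ∈ t, x ≠ 0) :
    Xhat w (List.replicate i 0 ++ t) = w.take i ++ t.map (w.getLast! + ·) := by
  have hmin : min i w.length = i := by omega
  refine List.ext_getElem (by simp [Xhat_eq_zipWith, hmin]; omega) fun j _ _ => ?_
  simp only [Xhat_eq_zipWith, List.getElem_zipWith, List.getElem_append, List.length_replicate,
    List.getElem_replicate, List.length_take, hmin, List.getElem_take, List.getElem_map]
  split_ifs
  · simp [xhatEntry]
  · simp [xhatEntry, ht _ (List.getElem_mem _)]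

theorem Xhat_replicate_length (w : List ℕ) : Xhat w (List.replicate w.length 0) = w := by
  simpa using Xhat_replicate_append (w := w) (i := w.length) (t := []) (by simp) (by simp)

theorem Xhat_prefix {w s t : List ℕ} (h : s <+: t) : Xhat w s <+: Xhat w t := by
  have hs : Xhat w s = (Xhat w t).take s.length := by
    rw [Xhat_eq_zipWith w t, List.take_zipWith, ← List.prefix_iff_eq_take.1 h]
    rfl
  exact hs ▸ List.take_prefix _ _

theorem nonDec_Xhat {w s : List ℕ} (hw : NonDec w) (hs : NonDec s) : NonDec (Xhat w s) := by
  rw [Xhat_eq_zipWith]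
  refine List.isChain_iff_getElem.2 fun i hi => ?_
  simp only [List.length_zipWith] at hi
  simp only [List.getElem_zipWith]
  exact xhatEntry_le_xhatEntry (hw.le_getLast! (List.getElem_mem _))
    (List.isChain_iff_getElem.1 hw i (by omega)) (List.isChain_iff_getElem.1 hs i (by omega))

theorem getLast!_Xhat {w s : List ℕ} (hs : s ≠ []) (h : s.length ≤ w.length) :
    (Xhat w s).getLast! = xhatEntry w.getLast! (w.getD (s.length - 1) 0) s.getLast! := by
  have hpos : 0 < s.length := List.length_pos_of_ne_nil hs
  have hlen : (Xhat w s).length = s.length := length_Xhat h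
  rw [List.getLast!_eq_getElem! (l := Xhat w s), List.getLast!_eq_getElem! (l := s),
    getElem!_pos (Xhat w s) _ (by omega),
    getElem!_pos s _ (by omega), List.getD_eq_getElem _ _ (by omega)]
  simp only [Xhat_eq_zipWith, List.getElem_zipWith, List.length_zipWith, Nat.min_eq_right h]

theorem Xhat_ne_nil {w s : List ℕ} (hs : s ≠ []) (h : s.length ≤ w.length) : Xhat w s ≠ [] :=
  List.ne_nil_of_length_pos (length_Xhat h ▸ List.length_pos_of_ne_nil hs)

theorem lex_Xhat {w s t : List ℕ} (hw : NonDec w) (htw : t.length ≤ w.length)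
    (h : List.Lex (· < ·) s t) : List.Lex (· < ·) (Xhat w s) (Xhat w t) := by
  rw [Xhat_eq_zipWith, Xhat_eq_zipWith]
  exact lex_zipWith_left (r := (· < ·))
    (fun c hc _ _ hab => xhatEntry_lt_xhatEntry (hw.le_getLast! hc) hab) htw h

theorem prec_Xhat {w s t : List ℕ} (hw : NonDec w) (hs : NonDec s) (ht : NonDec t)
    (hsw : s.length ≤ w.length) (htw : t.length ≤ w.length) (h : prec s t) :
    prec (Xhat w s) (Xhat w t) := by
  rcases h with ⟨rfl, ht0⟩ | ⟨hs0, ht0, hlt | ⟨heq, hlex⟩⟩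
  · exact Or.inl ⟨by simp [Xhat], Xhat_ne_nil ht0 htw⟩
  · refine Or.inr ⟨Xhat_ne_nil hs0 hsw, Xhat_ne_nil ht0 htw, Or.inl ?_⟩
    rw [getLast!_Xhat hs0 hsw, getLast!_Xhat ht0 htw]
    exact xhatEntry_lt_xhatEntry (hw.getD_le_getLast! _) hlt
  · have hle : (Xhat w s).getLast! ≤ (Xhat w t).getLast! := by
      rw [getLast!_Xhat hs0 hsw, getLast!_Xhat ht0 htw, ← heq]
      by_cases h0 : s.getLast! = 0
      · -- `s` and `t` are then blocks of zeros, and the shorter one is `s`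
        rw [hs.eq_replicate_of_getLast!_eq_zero h0,
          ht.eq_replicate_of_getLast!_eq_zero (heq ▸ h0)] at hlex
        have hst : s.length < t.length := lt_of_lex_replicate (lt_irrefl 0) hlex
        exact xhatEntry_le_xhatEntry (hw.getD_le_getLast! _)
          (hw.getD_le_getD (by omega) (by omega)) le_rfl
      · simp only [xhatEntry, if_neg h0, le_rfl]
    exact Or.inr ⟨Xhat_ne_nil hs0 hsw, Xhat_ne_nil ht0 htw,
      hle.lt_or_eq.imp_right fun h => ⟨h, lex_Xhat hw htw hlex⟩⟩

theorem isEkTree_Xhat {n : ℕ} {w : List ℕ} (hw : NonDec w) (hn : n ≤ w.length) :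
    IsEkTree n (Xhat w) :=
  ⟨fun _ hs hsn => ⟨nonDec_Xhat hw hs, length_Xhat (hsn.trans hn)⟩,
    fun _ _ hs ht hsn htn => ⟨prec_Xhat hw hs ht (hsn.trans hn) (htn.trans hn), Xhat_prefix⟩⟩

theorem exists_Xhat_eq {w e : List ℕ} (he : NonDec e) (hlen : e.length = w.length) {i : ℕ}
    (hi : i ≤ e.length) (htake : e.take i = w.take i) (hdrop : ∀ x ∈ e.drop i, w.getLast! < x) :
    ∃ s, NonDec s ∧ s.length = w.length ∧ Xhat w s = e := by
  set t := (e.drop i).map (· - w.getLast!)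
  have ht : ∀ x ∈ t, x ≠ 0 := by
    simp only [t, List.mem_map]
    rintro _ ⟨x, hx, rfl⟩
    have := hdrop x hx
    omega
  refine ⟨List.replicate i 0 ++ t, ?_, by simp [t]; omega, ?_⟩
  · refine List.isChain_append.2 ⟨nonDec_replicate_zero i, ?_, fun x hx _ _ => ?_⟩
    · exact (List.isChain_map _).2 ((he.drop i).imp fun _ _ h => Nat.sub_le_sub_right h _)
    · rw [List.eq_of_mem_replicate (List.mem_of_mem_getLast? hx)]
      exact Nat.zero_le _
  · rw [Xhat_replicate_append (by simp [t]; omega) ht, ← htake, List.map_map]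
    conv_rhs => rw [← List.take_append_drop i e]
    congr 1
    refine List.map_congr_left (fun x hx => ?_) |>.trans (List.map_id _)
    have := hdrop x hx
    simp only [Function.comp_apply, id]
    omega

def initialSegment (n : ℕ) (Y : List ℕ → List ℕ) (b : List ℕ) : Set (List ℕ) :=
  {x | (∃ s, NonDec s ∧ s.length = n ∧ x = Y s) ∧ (x = b ∨ prec x b)}

namespace IsEkTree

variable {k : ℕ} {X : List ℕ → List ℕ}

theorem length_apply (hX : IsEkTree k X) {s : List ℕ} (hs : NonDec s) (hsk : s.length ≤ k) :
    (X s).length = s.length :=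
  (hX.1 s hs hsk).2

theorem prec_apply (hX : IsEkTree k X) {s t : List ℕ} (hs : NonDec s) (ht : NonDec t)
    (hsk : s.length ≤ k) (htk : t.length ≤ k) (h : prec s t) : prec (X s) (X t) :=
  (hX.2 s t hs ht hsk htk).1 h

theorem apply_prefix (hX : IsEkTree k X) {s t : List ℕ} (hs : NonDec s) (ht : NonDec t)
    (hsk : s.length ≤ k) (htk : t.length ≤ k) (h : s <+: t) : X s <+: X t :=
  (hX.2 s t hs ht hsk htk).2 h

theorem eq_or_prec_apply_replicate (hX : IsEkTree k X) {s : List ℕ} (hs : NonDec s)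
    (hsk : s.length = k) : X s = X (List.replicate k 0) ∨ prec (X (List.replicate k 0)) (X s) := by
  subst hsk
  by_cases h : s = List.replicate s.length 0
  · exact Or.inl (congrArg X h)
  · exact Or.inr (hX.prec_apply (nonDec_replicate_zero _) hs (by simp) le_rfl
      (prec_replicate_zero hs h))

theorem apply_replicate_eq_take (hX : IsEkTree k X) {j : ℕ} (hj : j ≤ k) :
    X (List.replicate j 0) = (X (List.replicate k 0)).take j := by
  have hpre : X (List.replicate j 0) <+: X (List.replicate k 0) :=
    hX.apply_prefix (nonDec_replicate_zero j) (nonDec_replicate_zero k) (by simpa) (by simp)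
      (List.prefix_replicate_iff.2 ⟨by simpa, by simp⟩)
  rw [List.prefix_iff_eq_take.1 hpre, hX.length_apply (nonDec_replicate_zero j) (by simpa),
    List.length_replicate]

theorem exists_apply_replicate_append_singleton (hX : IsEkTree k X) {j : ℕ} (hj : j < k)
    (a : ℕ) : ∃ x, X (List.replicate j 0 ++ [a]) = (X (List.replicate k 0)).take j ++ [x] := by
  have hnd := nonDec_replicate_zero_append_singleton j a
  obtain ⟨r, hr⟩ := hX.apply_prefix (nonDec_replicate_zero j) hnd (by simp; omega)
    (by simp; omega) (List.prefix_append _ _)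
  have hlen := hX.length_apply hnd (by simp; omega)
  rw [← hr, List.length_append, hX.length_apply (nonDec_replicate_zero j) (by simp; omega)] at hlen
  obtain ⟨x, rfl⟩ := List.length_eq_one_iff.1 (by simpa using hlen)
  exact ⟨x, by rw [← hr, hX.apply_replicate_eq_take hj.le]⟩

theorem getLast!_lt_getLast!_apply_replicate_append_singleton (hX : IsEkTree k X) {i m : ℕ}
    (hm : m ≠ 0) (hi : i < k) :
    (X (List.replicate k 0)).getLast! < (X (List.replicate i 0 ++ [m])).getLast! := by
  have hk : k ≠ 0 := by omega
  have hvk : (X (List.replicate k 0)).length = k := by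
    simpa using hX.length_apply (nonDec_replicate_zero k) (by simp)
  have hnd := (nonDec_replicate_zero_append_singleton · m)
  -- `0^(k-1) m` and `0^k` have equal length, so their images differ only in the last entry
  obtain ⟨y, hy⟩ := hX.exists_apply_replicate_append_singleton (j := k - 1) (by omega) m
  have hvy : (X (List.replicate k 0)).getLast! <
      (X (List.replicate (k - 1) 0 ++ [m])).getLast! := by
    refine getLast!_lt_of_prec (hX.prec_apply (nonDec_replicate_zero k) (hnd _) (by simp)
      (by simp; omega) ?_) (List.ne_nil_of_length_pos (by omega))
      (by simp [hy, List.dropLast_eq_take, hvk])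
    exact Or.inr ⟨by simpa, by simp, Or.inl (by simp [List.getLast?_replicate, hk]; omega)⟩
  refine hvy.trans_le ?_
  rcases (show i = k - 1 ∨ i < k - 1 by omega) with rfl | hik
  · exact le_rfl
  obtain ⟨d, hd⟩ : ∃ d, k - 1 = i + (d + 1) := ⟨k - 2 - i, by omega⟩
  refine getLast!_le_of_prec (hX.prec_apply (hnd _) (hnd _) (by simp; omega) (by simp; omega)
    (Or.inr ⟨by simp, by simp, Or.inr ⟨by simp, ?_⟩⟩))
  rw [hd, List.replicate_add, List.replicate_succ, List.append_assoc]
  exact List.Lex.append_left _ (List.Lex.rel (Nat.pos_of_ne_zero hm)) _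

theorem exists_take_eq_and_lt (hX : IsEkTree k X) {s : List ℕ} (hs : NonDec s)
    (hsk : s.length = k) :
    ∃ i ≤ k, (X s).take i = (X (List.replicate k 0)).take i ∧
      ∀ x ∈ (X s).drop i, (X (List.replicate k 0)).getLast! < x := by
  have hXs := hX.1 s hs hsk.le
  rcases eq_replicate_zero_or_exists s with h0 | ⟨i, m, r, hm, rfl⟩
  · refine ⟨k, le_rfl, by rw [h0, hsk], fun x hx => ?_⟩
    simp [List.drop_eq_nil_of_le (hXs.2.trans hsk).le] at hx
  have hik : i < k := by simp at hsk; omega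
  obtain ⟨x, hx⟩ := hX.exists_apply_replicate_append_singleton hik m
  have hLx : (X (List.replicate k 0)).getLast! < x := by
    simpa [hx] using hX.getLast!_lt_getLast!_apply_replicate_append_singleton hm hik
  obtain ⟨r', hr'⟩ := hX.apply_prefix (nonDec_replicate_zero_append_singleton i m) hs
    (by simp; omega) hsk.le ⟨r, by simp⟩
  rw [hx, List.append_assoc, List.singleton_append] at hr'
  have hlen : ((X (List.replicate k 0)).take i).length = i := by
    simpa [hX.length_apply (nonDec_replicate_zero k)] using hik.le
  refine ⟨i, hik.le, by rw [← hr', List.take_left' hlen], ?_⟩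
  rw [← hr', List.drop_left' hlen]
  have hnd : NonDec (x :: r') := (List.isChain_append.1 (hr' ▸ hXs.1)).2.1
  intro z hz
  rcases List.mem_cons.1 hz with rfl | hz
  · exact hLx
  · exact hLx.trans_le ((List.pairwise_cons.1 (List.isChain_iff_pairwise.1 hnd)).1 z hz)

theorem apply_replicate_eq_of_min (hX : IsEkTree k X) {E : Finset (List ℕ)}
    (hinit : ∀ s, NonDec s → s.length = k → ∀ e ∈ E, prec (X s) e → X s ∈ E)
    {t : List ℕ} (ht : NonDec t) (htk : t.length = k) (htE : X t ∈ E)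
    (hmin : ∀ e ∈ E, e = X t ∨ prec (X t) e) : X (List.replicate k 0) = X t := by
  refine (hX.eq_or_prec_apply_replicate ht htk).elim Eq.symm fun h => ?_
  have hmem := hinit _ (nonDec_replicate_zero k) (by simp) _ htE h
  exact (hmin _ hmem).resolve_right fun h' => prec_asymm h h'

theorem exists_Xhat_zero_cons_eq (hX : IsEkTree k X) {s : List ℕ} (hs : NonDec s)
    (hsk : s.length = k) :
    ∃ s', NonDec s' ∧ s'.length = k + 1 ∧ Xhat (0 :: X (List.replicate k 0)) s' = 0 :: X s := by
  obtain ⟨i, hik, htake, hdrop⟩ := hX.exists_take_eq_and_lt hs hsk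
  have hv := hX.length_apply (nonDec_replicate_zero k) (by simp)
  have hXs := hX.1 s hs hsk.le
  simpa [hv] using exists_Xhat_eq (w := 0 :: X (List.replicate k 0)) (e := 0 :: X s)
    hXs.1.zero_cons (by simp [hXs.2, hsk, hv])
    (i := i + 1) (by simp [hXs.2, hsk]; omega) (by simp [htake])
    (by rwa [List.drop_succ_cons, getLast!_zero_cons])

theorem finite_initialSegment (hX : IsEkTree k X) (b : List ℕ) :
    (initialSegment k X b).Finite := by
  refine (finite_setOf_length_eq_forall_le k b.getLast!).subset ?_
  rintro _ ⟨⟨s, hs, hsk, rfl⟩, hb⟩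
  have hXs := hX.1 s hs hsk.le
  refine ⟨hXs.2.trans hsk, fun x hx => (hXs.1.le_getLast! hx).trans ?_⟩
  rcases hb with hb | hb
  · rw [hb]
  · exact getLast!_le_of_prec hb

theorem memAR_initialSegment (hX : IsEkTree k X) (b : List ℕ) :
    memAR k (hX.finite_initialSegment b).toFinset := by
  have hF := hX.finite_initialSegment b
  refine ⟨X, hX, fun e he => (hF.mem_toFinset.1 he).1,
    fun s hs hsk e he hse => hF.mem_toFinset.2 ⟨⟨s, hs, hsk, rfl⟩, ?_⟩⟩
  rcases (hF.mem_toFinset.1 he).2 with rfl | heb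
  · exact Or.inr hse
  · exact Or.inr (prec_trans hse heb)

end IsEkTree

theorem AR_extend_cons_zero_general (k : ℕ) (E : Finset (List ℕ)) (hE : memAR k E)
    (v : List ℕ) (hvE : v ∈ E) (hmin : ∀ e ∈ E, e = v ∨ prec v e)
    (u : List ℕ) (hmax : ∀ e ∈ E, e = u ∨ prec e u) :
    ∃ F : Finset (List ℕ), memAR (k + 1) F ∧
      (∀ e ∈ E, (0 :: e) ∈ F) ∧
      (∀ w ∈ F, w = 0 :: v ∨ prec (0 :: v) w) ∧
      (∀ w ∈ F, w = 0 :: u ∨ prec w (0 :: u)) := by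
  obtain ⟨X, hX, hrep, hinit⟩ := hE
  obtain ⟨t, ht, htk, rfl⟩ := hrep v hvE
  have hvmin := hX.apply_replicate_eq_of_min hinit ht htk hvE hmin
  obtain ⟨hvnd, hvk⟩ := hX.1 t ht htk.le
  have hY : IsEkTree (k + 1) (Xhat (0 :: X t)) :=
    isEkTree_Xhat hvnd.zero_cons (by simp [hvk, htk])
  have hF := hY.finite_initialSegment (0 :: u)
  refine ⟨hF.toFinset, hY.memAR_initialSegment _, fun e he => ?_, fun w hw => ?_,
    fun w hw => (hF.mem_toFinset.1 hw).2⟩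
  · obtain ⟨s, hs, hsk, rfl⟩ := hrep e he
    obtain ⟨s', hs', hs'k, hYs'⟩ := hX.exists_Xhat_zero_cons_eq hs hsk
    rw [hvmin] at hYs'
    exact hF.mem_toFinset.2
      ⟨⟨s', hs', hs'k, hYs'.symm⟩, (hmax _ he).imp (congrArg _) prec_zero_cons⟩
  · obtain ⟨⟨s, hs, hsk, rfl⟩, -⟩ := hF.mem_toFinset.1 hw
    have hY0 := Xhat_replicate_length (0 :: X t)
    rw [List.length_cons, hvk, htk] at hY0
    simpa [hY0] using hY.eq_or_prec_apply_replicate hs hsk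

/-- for `E ∈ AR^k` with `≺`-minimum `v` and `≺`-maximum `u`, there is
`F ∈ AR^{k+1}` containing `Φ(E) = {0⌢e : e ∈ E}`, whose `≺`-minimum is
`Φ(v) = min_≺ Φ(E)` and whose `≺`-maximum is `Φ(u) = max_≺ Φ(E)`. -/
theorem AR_extend_cons_zero (k : ℕ) (E : Finset (List ℕ)) (hE : memAR k E)
    (v : List ℕ) (hvE : v ∈ E) (hmin : ∀ e ∈ E, e = v ∨ prec v e)
    (u : List ℕ) (huE : u ∈ E) (hmax : ∀ e ∈ E, e = u ∨ prec e u) :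
    ∃ F : Finset (List ℕ), memAR (k + 1) F ∧
      (∀ e ∈ E, (0 :: e) ∈ F) ∧
      (∀ w ∈ F, w = 0 :: v ∨ prec (0 :: v) w) ∧
      (∀ w ∈ F, w = 0 :: u ∨ prec w (0 :: u)) :=
  AR_extend_cons_zero_general k E hE v hvE hmin u hmax
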